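/- arXiv:1510.09123 — 3 statements merged into one kernel-verified Lean document; each statement's English description precedes it below -/
import Mathlib

section
/- Let (P, H_w) be a smoothed range space of n points and (P, A) a linked binary range space, and let 0 < τ < ε < 1. If Q is an (ε−τ)-net of the binary range space (P, A), then Q is an (ε,τ)-net of (P, H_w). -/
open Finset
open scoped Classical

/- A Markov-type counting argument: points with value below τ contribute less than τ each and
the others at most 1, so an average of at least ε forces at least (ε - τ) n points with value
at least τ. By linkage these points form a range of A, which the net must hit. -/

section ReverseMarkov

variable {α : Type*} (s : Finset α) (f : α → ℝ) (t : ℝ)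

theorem sum_le_card_filter_add_mul_card_filter_not (hf : ∀ p ∈ s, f p ≤ 1) :
    ∑ p ∈ s, f p ≤ #(s.filter (t ≤ f ·)) + t * #(s.filter (¬ t ≤ f ·)) := by
  rw [← sum_filter_add_sum_filter_not s (t ≤ f ·)]
  gcongr
  · calc ∑ p ∈ s.filter (t ≤ f ·), f p ≤ ∑ _p ∈ s.filter (t ≤ f ·), (1 : ℝ) :=
          sum_le_sum fun p hp => hf p (mem_filter.mp hp).1
      _ = #(s.filter (t ≤ f ·)) := by simp
  · calc ∑ p ∈ s.filter (¬ t ≤ f ·), f p ≤ ∑ _p ∈ s.filter (¬ t ≤ f ·), t :=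
          sum_le_sum fun p hp => (not_le.mp (mem_filter.mp hp).2).le
      _ = t * #(s.filter (¬ t ≤ f ·)) := by rw [sum_const, nsmul_eq_mul, mul_comm]

theorem sub_mul_card_le_card_filter_of_le_average (hf : ∀ p ∈ s, f p ≤ 1) (ht : 0 ≤ t)
    {ε : ℝ} (havg : ε ≤ (∑ p ∈ s, f p) / #s) :
    (ε - t) * #s ≤ #(s.filter (t ≤ f ·)) := by
  rcases s.eq_empty_or_nonempty with rfl | hs
  · simp
  have hmass : ε * #s ≤ ∑ p ∈ s, f p := (le_div_iff₀ (by exact_mod_cast hs.card_pos)).mp havg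
  have hsplit : (#s : ℝ) = #(s.filter (t ≤ f ·)) + #(s.filter (¬ t ≤ f ·)) := by
    exact_mod_cast (card_filter_add_card_filter_not (t ≤ f ·)).symm
  have hbound := sum_le_card_filter_add_mul_card_filter_not s f t hf
  nlinarith

end ReverseMarkov

theorem linked_eps_net_general {d : ℕ} (P Q : Finset (EuclideanSpace ℝ (Fin d)))
    (H : Set (EuclideanSpace ℝ (Fin d) → ℝ))
    (A : Set (Set (EuclideanSpace ℝ (Fin d))))
    (ε τ : ℝ) (hτ : 0 < τ)
    (hQP : Q ⊆ P)
    (hval : ∀ h ∈ H, ∀ p ∈ P, h p ∈ Set.Icc (0:ℝ) 1)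
    (hlink : ∀ h ∈ H, ∀ t : ℝ, 0 < t → ∃ A0 ∈ A, ∀ p ∈ P, (t ≤ h p ↔ p ∈ A0))
    (hnet : ∀ A0 ∈ A, (ε - τ) * P.card ≤ ((P.filter (fun p => p ∈ A0)).card : ℝ) →
      ∃ q ∈ Q, q ∈ A0) :
    ∀ h ∈ H, ε ≤ (∑ p ∈ P, h p) / P.card → ∃ q ∈ Q, τ ≤ h q := by
  intro h hH havg
  obtain ⟨A0, hA0, hiff⟩ := hlink h hH τ hτ
  have hlevel : P.filter (τ ≤ h ·) = P.filter (· ∈ A0) := filter_congr hiff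
  have hlarge := sub_mul_card_le_card_filter_of_le_average P h τ
    (fun p hp => (hval h hH p hp).2) hτ.le havg
  obtain ⟨q, hqQ, hqA⟩ := hnet A0 hA0 (hlevel ▸ hlarge)
  exact ⟨q, hqQ, (hiff q (hQP hqQ)).mpr hqA⟩

/-- If Q is an (ε−τ)-net of a binary range space (P, A) linked to the
smoothed range space (P, H_w), then Q is an (ε,τ)-net of (P, H_w). -/
theorem linked_eps_net {d : ℕ} (P Q : Finset (EuclideanSpace ℝ (Fin d)))
    (H : Set (EuclideanSpace ℝ (Fin d) → ℝ))
    (A : Set (Set (EuclideanSpace ℝ (Fin d))))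
    (ε τ : ℝ) (hτ : 0 < τ) (hτε : τ < ε) (hε : ε < 1)
    (hQP : Q ⊆ P)
    (hval : ∀ h ∈ H, ∀ p ∈ P, h p ∈ Set.Icc (0:ℝ) 1)
    (hlink : ∀ h ∈ H, ∀ t : ℝ, 0 < t → ∃ A0 ∈ A, ∀ p ∈ P, (t ≤ h p ↔ p ∈ A0))
    (hnet : ∀ A0 ∈ A, (ε - τ) * P.card ≤ ((P.filter (fun p => p ∈ A0)).card : ℝ) →
      ∃ q ∈ Q, q ∈ A0) :
    ∀ h ∈ H, ε ≤ (∑ p ∈ P, h p) / P.card → ∃ q ∈ Q, τ ≤ h q :=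
  linked_eps_net_general P Q H A ε τ hτ hQP hval hlink hnet
end

section
/- Let (P, H_w) be a smoothed range space and (P, A) a linked binary range space. If Q ⊆ P is an ε-sample of (P, A), then Q is an ε-sample of (P, H_w), i.e., |sde_P(h) − sde_Q(h)| ≤ ε for all h ∈ H_w. -/
/- Layer cake: for values in `[0, 1]`, the sum `∑ p ∈ S, f p` equals `∫₀¹ #{p ∈ S | t ≤ f p} dt`.
Hence the difference of the averages over `P` and `Q` is the integral over `t ∈ (0, 1]` of the
difference of the relative sizes of the superlevel sets `{t ≤ f}`, each of which is at most `ε`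
in absolute value when those superlevel sets are ranges of an `ε`-sample. -/

open Finset
open scoped Classical
open MeasureTheory Set

theorem integral_ite_le_eq {v : ℝ} (hv : v ∈ Icc (0 : ℝ) 1) :
    ∫ t in (0 : ℝ)..1, (if t ≤ v then 1 else 0 : ℝ) = v := by
  have hind : (fun t : ℝ => if t ≤ v then (1 : ℝ) else 0) = (Iic v).indicator 1 := by
    ext t; simp [indicator_apply]
  rw [hind, intervalIntegral.integral_of_le zero_le_one, integral_indicator measurableSet_Iic,
    Measure.restrict_restrict measurableSet_Iic, inter_comm, Ioc_inter_Iic,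
    inf_eq_right.mpr hv.2]
  simp [Real.volume_real_Ioc_of_le hv.1]

theorem sum_eq_integral_card_filter_le {α : Type*} (S : Finset α) (f : α → ℝ)
    (hf : ∀ p ∈ S, f p ∈ Icc (0 : ℝ) 1) :
    ∑ p ∈ S, f p = ∫ t in (0 : ℝ)..1, (#{p ∈ S | t ≤ f p} : ℝ) := by
  have hcard : (fun t : ℝ => (#{p ∈ S | t ≤ f p} : ℝ)) =
      fun t => ∑ p ∈ S, if t ≤ f p then (1 : ℝ) else 0 := by
    ext t; exact natCast_card_filter _ _
  have hint : ∀ p ∈ S, IntervalIntegrable (fun t : ℝ => if t ≤ f p then (1 : ℝ) else 0)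
      volume 0 1 := fun p _ =>
    Antitone.intervalIntegrable fun s t hst => by
      split_ifs with ht hs <;> first | exact absurd (hst.trans ht) hs | norm_num
  rw [hcard, intervalIntegral.integral_finsetSum hint]
  exact sum_congr rfl fun p hp => (integral_ite_le_eq (hf p hp)).symm

theorem intervalIntegrable_card_filter_le {α : Type*} (S : Finset α) (f : α → ℝ) (a b : ℝ) :
    IntervalIntegrable (fun t : ℝ => (#{p ∈ S | t ≤ f p} : ℝ)) volume a b :=
  Antitone.intervalIntegrable fun s t hst => Nat.cast_le.mpr <| card_le_card
    fun p hp => by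
      simp only [mem_filter] at hp ⊢
      exact ⟨hp.1, hst.trans hp.2⟩

theorem abs_sub_average_le_of_card_filter_le {α : Type*} (P Q : Finset α) (f : α → ℝ) {ε : ℝ}
    (hP : ∀ p ∈ P, f p ∈ Icc (0 : ℝ) 1) (hQ : ∀ q ∈ Q, f q ∈ Icc (0 : ℝ) 1)
    (hlevel : ∀ t : ℝ, 0 < t →
      |(#{p ∈ P | t ≤ f p} : ℝ) / #P - (#{q ∈ Q | t ≤ f q} : ℝ) / #Q| ≤ ε) :
    |(∑ p ∈ P, f p) / #P - (∑ q ∈ Q, f q) / #Q| ≤ ε := by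
  have hdiff : (∑ p ∈ P, f p) / #P - (∑ q ∈ Q, f q) / #Q =
      ∫ t in (0 : ℝ)..1, ((#{p ∈ P | t ≤ f p} : ℝ) / #P - (#{q ∈ Q | t ≤ f q} : ℝ) / #Q) := by
    rw [intervalIntegral.integral_sub
        ((intervalIntegrable_card_filter_le P f 0 1).div_const _)
        ((intervalIntegrable_card_filter_le Q f 0 1).div_const _),
      intervalIntegral.integral_div, intervalIntegral.integral_div,
      sum_eq_integral_card_filter_le P f hP, sum_eq_integral_card_filter_le Q f hQ]
  rw [hdiff, ← Real.norm_eq_abs]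
  calc _ ≤ ε * |(1 : ℝ) - 0| := intervalIntegral.norm_integral_le_of_norm_le_const fun t ht =>
        (Real.norm_eq_abs _).trans_le (hlevel t (uIoc_of_le (zero_le_one (α := ℝ)) ▸ ht).1)
    _ = ε := by norm_num

theorem linked_eps_sample_general {d : ℕ} (P Q : Finset (EuclideanSpace ℝ (Fin d)))
    (H : Set (EuclideanSpace ℝ (Fin d) → ℝ))
    (A : Set (Set (EuclideanSpace ℝ (Fin d))))
    (ε : ℝ)
    (hQP : Q ⊆ P)
    (hval : ∀ h ∈ H, ∀ p ∈ P, h p ∈ Set.Icc (0:ℝ) 1)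
    (hlink : ∀ h ∈ H, ∀ t : ℝ, 0 < t → ∃ A0 ∈ A, ∀ p ∈ P, (t ≤ h p ↔ p ∈ A0))
    (hsamp : ∀ A0 ∈ A,
      |((P.filter (fun p => p ∈ A0)).card : ℝ) / P.card -
        ((Q.filter (fun p => p ∈ A0)).card : ℝ) / Q.card| ≤ ε) :
    ∀ h ∈ H, |(∑ p ∈ P, h p) / P.card - (∑ q ∈ Q, h q) / Q.card| ≤ ε := by
  intro h hH
  refine abs_sub_average_le_of_card_filter_le P Q h (hval h hH)
    (fun q hq => hval h hH q (hQP hq)) fun t ht => ?_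
  obtain ⟨A0, hA0, hiff⟩ := hlink h hH t ht
  rw [filter_congr hiff,
    filter_congr fun q hq => hiff q (hQP hq)]
  exact hsamp A0 hA0

/-- An ε-sample of a linked binary range space (P, A) is also an
ε-sample of the smoothed range space (P, H_w). -/
theorem linked_eps_sample {d : ℕ} (P Q : Finset (EuclideanSpace ℝ (Fin d)))
    (H : Set (EuclideanSpace ℝ (Fin d) → ℝ))
    (A : Set (Set (EuclideanSpace ℝ (Fin d))))
    (ε : ℝ) (hε : 0 < ε)
    (hQP : Q ⊆ P)
    (hval : ∀ h ∈ H, ∀ p ∈ P, h p ∈ Set.Icc (0:ℝ) 1)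
    (hlink : ∀ h ∈ H, ∀ t : ℝ, 0 < t → ∃ A0 ∈ A, ∀ p ∈ P, (t ≤ h p ↔ p ∈ A0))
    (hsamp : ∀ A0 ∈ A,
      |((P.filter (fun p => p ∈ A0)).card : ℝ) / P.card -
        ((Q.filter (fun p => p ∈ A0)).card : ℝ) / Q.card| ≤ ε) :
    ∀ h ∈ H, |(∑ p ∈ P, h p) / P.card - (∑ q ∈ Q, h q) / Q.card| ≤ ε :=
  linked_eps_sample_general P Q H A ε hQP hval hlink hsamp
end

section
/- Let p, p', q, q' be points in ℝ^d and let p_B, q_B be points on segment pq and p'_B, q'_B points on segment p'q'. If ‖p_B − p'_B‖ + ‖q_B − q'_B‖ < ‖p_B − q_B‖ + ‖p'_B − q'_B‖, then ‖p − p'‖ + ‖q − q'‖ < ‖p − q‖ + ‖p' − q'‖. -/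
/-! The cross edges `p p'` and `q q'` are bounded by the triangle inequality through the
inner points, `p → p_B → p'_B → p'` and `q → q_B → q'_B → q'`; since the outer pieces
`‖p - p_B‖, ‖q_B - q‖, …` are shared with the original edges, the strict inequality between
the inner sums transfers to the outer ones. -/

theorem dist_add_dist_lt_of_betweenness {X : Type*} [PseudoMetricSpace X]
    {p q p' q' pB qB pB' qB' : X}
    (h1 : dist p q = dist p pB + dist pB qB + dist qB q)
    (h2 : dist p' q' = dist p' pB' + dist pB' qB' + dist qB' q')
    (h3 : dist pB pB' + dist qB qB' < dist pB qB + dist pB' qB') :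
    dist p p' + dist q q' < dist p q + dist p' q' := by
  have hp : dist p p' ≤ dist p pB + dist pB pB' + dist pB' p' := dist_triangle4 _ _ _ _
  have hq : dist q q' ≤ dist q qB + dist qB qB' + dist qB' q' := dist_triangle4 _ _ _ _
  rw [dist_comm pB' p'] at hp
  rw [dist_comm q qB] at hq
  linarith

/-- the exchange argument.  If p_B, q_B lie (in order) on segment pq and
p'_B, q'_B lie (in order) on segment p'q', and the cross distances
‖p_B−p'_B‖ + ‖q_B−q'_B‖ are smaller than ‖p_B−q_B‖ + ‖p'_B−q'_B‖, then swapping the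
matching edges strictly decreases the cost: ‖p−p'‖ + ‖q−q'‖ < ‖p−q‖ + ‖p'−q'‖. -/
theorem exchange_argument {d : ℕ}
    (p q p' q' pB qB pB' qB' : EuclideanSpace ℝ (Fin d))
    (h1 : ‖p - q‖ = ‖p - pB‖ + ‖pB - qB‖ + ‖qB - q‖)
    (h2 : ‖p' - q'‖ = ‖p' - pB'‖ + ‖pB' - qB'‖ + ‖qB' - q'‖)
    (h3 : ‖pB - pB'‖ + ‖qB - qB'‖ < ‖pB - qB‖ + ‖pB' - qB'‖) :
    ‖p - p'‖ + ‖q - q'‖ < ‖p - q‖ + ‖p' - q'‖ := by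
  simp only [← dist_eq_norm] at h1 h2 h3 ⊢
  exact dist_add_dist_lt_of_betweenness h1 h2 h3
end
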